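/- arXiv:0901.0356 — 2 statements merged into one kernel-verified Lean document; each statement's English description precedes it below -/
import Mathlib

section
/- Let w : [0,1] → ℝ≥0 be continuous, W(t) = ∫_0^t w(x) dx, and W̄(t) = ∫_0^t W(x) dx. Then for all η, η̂ ∈ [0,1], ∫_{min(η,η̂)}^{max(η,η̂)} |η - c|·w(c) dc = W̄(η) - W̄(η̂) - (η - η̂)·W(η̂). -/
/-! Integrating by parts against the antiderivative `W` of `w`,
`∫_η̂^η (η - c) w(c) dc = ∫_η̂^η W - (η - η̂) W(η̂)`, and `∫_η̂^η W = W̄(η) - W̄(η̂)`.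
The left side is the regret integral because `|η - c|` is `η - c` on `[η̂, η]` when `η̂ ≤ η`,
while for `η < η̂` both the sign of `η - c` and the orientation of the interval flip. -/

open Set intervalIntegral

theorem integral_min_max_abs_sub_mul (f : ℝ → ℝ) (x y : ℝ) :
    ∫ c in min x y..max x y, |x - c| * f c = ∫ c in y..x, (x - c) * f c := by
  rcases le_total y x with h | h
  · rw [min_eq_right h, max_eq_left h]
    refine integral_congr fun c hc => ?_
    rw [uIcc_of_le h] at hc
    simp only [abs_of_nonneg (sub_nonneg.2 hc.2)]
  · rw [min_eq_left h, max_eq_right h, integral_symm, ← integral_neg]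
    refine integral_congr fun c hc => ?_
    rw [uIcc_of_ge h] at hc
    simp only [abs_of_nonpos (sub_nonpos.2 hc.1), neg_mul_eq_neg_mul, neg_sub]

theorem integral_sub_mul_eq_of_hasDerivAt {w W : ℝ → ℝ} {a b : ℝ}
    (hW : ∀ x ∈ uIcc a b, HasDerivAt W (w x) x) (hw : IntervalIntegrable w MeasureTheory.volume a b) :
    ∫ c in a..b, (b - c) * w c = (∫ c in a..b, W c) - (b - a) * W a := by
  have hparts := integral_mul_deriv_eq_deriv_mul
    (fun x _ => (hasDerivAt_id x).const_sub b) hW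
    intervalIntegrable_const hw
  simp only [id, sub_self, zero_mul, neg_one_mul, integral_neg] at hparts
  rw [hparts]
  ring

theorem hasDerivAt_of_forall_eq_integral {f F : ℝ → ℝ} {a : ℝ} (hf : Continuous f)
    (hF : ∀ t, F t = ∫ x in a..t, f x) (t : ℝ) : HasDerivAt F (f t) t := by
  rw [funext hF]
  exact (hf.integral_hasStrictDerivAt a t).hasDerivAt

theorem weighted_regret_bregman_form_general (w : ℝ → ℝ) (hw : Continuous w)
    (W Wb : ℝ → ℝ)
    (hW : ∀ t, W t = ∫ x in (0:ℝ)..t, w x)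
    (hWb : ∀ t, Wb t = ∫ x in (0:ℝ)..t, W x) :
    ∀ η ∈ Set.Icc (0:ℝ) 1, ∀ ηh ∈ Set.Icc (0:ℝ) 1,
      (∫ c in (min η ηh)..(max η ηh), |η - c| * w c)
        = Wb η - Wb ηh - (η - ηh) * W ηh := by
  have hWd := hasDerivAt_of_forall_eq_integral hw hW
  have hWc : Continuous W := continuous_iff_continuousAt.2 fun t => (hWd t).continuousAt
  have hWbd := hasDerivAt_of_forall_eq_integral hWc hWb
  intro η _ ηh _
  rw [integral_min_max_abs_sub_mul,
    integral_sub_mul_eq_of_hasDerivAt (fun t _ => hWd t) (hw.intervalIntegrable _ _),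
    integral_eq_sub_of_hasDerivAt (fun t _ => hWbd t) (hWc.intervalIntegrable _ _)]

/-- The `w`-weighted regret has the Bregman form with generator `W̄`:
`∫_{η∧ηh}^{η∨ηh} |η - c| w(c) dc = W̄(η) - W̄(ηh) - (η-ηh)·W(ηh)`. -/
theorem weighted_regret_bregman_form (w : ℝ → ℝ) (hw : Continuous w)
    (hw0 : ∀ t ∈ Set.Icc (0:ℝ) 1, 0 ≤ w t) (W Wb : ℝ → ℝ)
    (hW : ∀ t, W t = ∫ x in (0:ℝ)..t, w x)
    (hWb : ∀ t, Wb t = ∫ x in (0:ℝ)..t, W x) :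
    ∀ η ∈ Set.Icc (0:ℝ) 1, ∀ ηh ∈ Set.Icc (0:ℝ) 1,
      (∫ c in (min η ηh)..(max η ηh), |η - c| * w c)
        = Wb η - Wb ηh - (η - ηh) * W ηh :=
  weighted_regret_bregman_form_general w hw W Wb hW hWb
end

section
/- Let P, Q be probability measures on a measurable space X, both absolutely continuous with respect to a probability measure M with densities p, q. For the convex function f(t) = (√t − 1)², the f-divergence satisfies the tight lower bound h²(P,Q) := ∫ (√p − √q)² dM ≥ 2 − √(4 − V²), where V := ∫ |p − q| dM is the variational divergence. -/
/-!
Write `s = √p`, `t = √q` and `H = ∫ (s - t)²`. Since `∫ s² = ∫ t² = 1`, the parallelogram law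
gives `∫ (s + t)² = 4 - H`, and `|p - q| = |s - t| (s + t)`, so Cauchy–Schwarz yields
`V² ≤ H (4 - H)`, i.e. `(2 - H)² ≤ 4 - V²`.
-/

open MeasureTheory

namespace MeasureTheory

variable {α : Type*} [MeasurableSpace α] {μ : Measure α} {f g : α → ℝ}

lemma sq_integral_abs_mul_le (hf : MemLp f 2 μ) (hg : MemLp g 2 μ) :
    (∫ x, |f x * g x| ∂μ) ^ 2 ≤ (∫ x, f x ^ 2 ∂μ) * ∫ x, g x ^ 2 ∂μ := by
  have holder := integral_mul_le_Lp_mul_Lq_of_nonneg (μ := μ) Real.HolderConjugate.two_two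
    (f := fun x => |f x|) (g := fun x => |g x|) (ae_of_all _ fun x => abs_nonneg _)
    (ae_of_all _ fun x => abs_nonneg _) (by rw [ENNReal.ofReal_ofNat]; exact hf.abs)
    (by rw [ENNReal.ofReal_ofNat]; exact hg.abs)
  simp only [← abs_mul, Real.rpow_two, sq_abs, ← Real.sqrt_eq_rpow] at holder
  calc (∫ x, |f x * g x| ∂μ) ^ 2
      ≤ (√(∫ x, f x ^ 2 ∂μ) * √(∫ x, g x ^ 2 ∂μ)) ^ 2 :=
        pow_le_pow_left₀ (integral_nonneg fun x => abs_nonneg _) holder 2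
    _ = (∫ x, f x ^ 2 ∂μ) * ∫ x, g x ^ 2 ∂μ := by
        rw [mul_pow, Real.sq_sqrt (integral_nonneg fun x => sq_nonneg _),
          Real.sq_sqrt (integral_nonneg fun x => sq_nonneg _)]

lemma integral_sq_sub_add_integral_sq_add (hf : MemLp f 2 μ) (hg : MemLp g 2 μ) :
    ∫ x, (f x - g x) ^ 2 ∂μ + ∫ x, (f x + g x) ^ 2 ∂μ
      = 2 * (∫ x, f x ^ 2 ∂μ + ∫ x, g x ^ 2 ∂μ) := by
  have hsub : Integrable (fun x => (f x - g x) ^ 2) μ := (hf.sub hg).integrable_sq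
  have hadd : Integrable (fun x => (f x + g x) ^ 2) μ := (hf.add hg).integrable_sq
  rw [← integral_add hsub hadd, ← integral_add hf.integrable_sq hg.integrable_sq,
    ← integral_const_mul]
  exact integral_congr_ae (ae_of_all _ fun x => by ring)

lemma memLp_two_sqrt (hf : Integrable f μ) (hf0 : 0 ≤ᵐ[μ] f) :
    MemLp (fun x => √(f x)) 2 μ := by
  refine (memLp_two_iff_integrable_sq
    (Real.continuous_sqrt.comp_aestronglyMeasurable hf.aestronglyMeasurable)).2 ?_
  refine hf.congr ?_
  filter_upwards [hf0] with x hx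
  exact (Real.sq_sqrt hx).symm

section Density

variable [IsProbabilityMeasure (μ.withDensity fun x => ENNReal.ofReal (f x))]

lemma lintegral_ofReal_eq_one_of_isProbabilityMeasure_withDensity :
    ∫⁻ x, ENNReal.ofReal (f x) ∂μ = 1 := by
  simpa [withDensity_apply _ MeasurableSet.univ] using
    measure_univ (μ := μ.withDensity fun x => ENNReal.ofReal (f x))

lemma integrable_of_isProbabilityMeasure_withDensity (hf : AEStronglyMeasurable f μ)
    (hf0 : 0 ≤ᵐ[μ] f) : Integrable f μ :=
  ⟨hf, by simp [hasFiniteIntegral_iff_ofReal hf0,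
    lintegral_ofReal_eq_one_of_isProbabilityMeasure_withDensity]⟩

lemma integral_eq_one_of_isProbabilityMeasure_withDensity (hf : AEStronglyMeasurable f μ)
    (hf0 : 0 ≤ᵐ[μ] f) : ∫ x, f x ∂μ = 1 := by
  simp [integral_eq_lintegral_of_nonneg_ae hf0 hf,
    lintegral_ofReal_eq_one_of_isProbabilityMeasure_withDensity]

lemma integral_sq_sqrt_of_isProbabilityMeasure_withDensity (hf : AEStronglyMeasurable f μ)
    (hf0 : 0 ≤ᵐ[μ] f) : ∫ x, √(f x) ^ 2 ∂μ = 1 := by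
  rw [← integral_eq_one_of_isProbabilityMeasure_withDensity hf hf0]
  refine integral_congr_ae ?_
  filter_upwards [hf0] with x hx
  exact Real.sq_sqrt hx

end Density

end MeasureTheory

lemma two_sub_sqrt_four_sub_sq_le {h v : ℝ} (hv : v ^ 2 ≤ h * (4 - h)) :
    2 - √(4 - v ^ 2) ≤ h := by
  have : |2 - h| ≤ √(4 - v ^ 2) := Real.abs_le_sqrt (by nlinarith)
  linarith [le_abs_self (2 - h)]

theorem hellinger_pinsker_general {X : Type*} [MeasurableSpace X]
    (M P Q : Measure X) [IsProbabilityMeasure P]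
    [IsProbabilityMeasure Q] (p q : X → ℝ) (hpm : Measurable p) (hqm : Measurable q)
    (hp0 : ∀ x, 0 ≤ p x) (hq0 : ∀ x, 0 ≤ q x)
    (hP : P = M.withDensity (fun x => ENNReal.ofReal (p x)))
    (hQ : Q = M.withDensity (fun x => ENNReal.ofReal (q x))) :
    2 - Real.sqrt (4 - (∫ x, |p x - q x| ∂M) ^ 2)
      ≤ ∫ x, (Real.sqrt (p x) - Real.sqrt (q x)) ^ 2 ∂M := by
  subst hP hQ
  have hp0' : 0 ≤ᵐ[M] p := ae_of_all _ hp0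
  have hq0' : 0 ≤ᵐ[M] q := ae_of_all _ hq0
  have hs := memLp_two_sqrt (integrable_of_isProbabilityMeasure_withDensity
    hpm.aestronglyMeasurable hp0') hp0'
  have ht := memLp_two_sqrt (integrable_of_isProbabilityMeasure_withDensity
    hqm.aestronglyMeasurable hq0') hq0'
  set H := ∫ x, (√(p x) - √(q x)) ^ 2 ∂M
  have hsum_sq : ∫ x, (√(p x) + √(q x)) ^ 2 ∂M = 4 - H := by
    have parallelogram := integral_sq_sub_add_integral_sq_add hs ht
    rw [integral_sq_sqrt_of_isProbabilityMeasure_withDensity hpm.aestronglyMeasurable hp0',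
      integral_sq_sqrt_of_isProbabilityMeasure_withDensity hqm.aestronglyMeasurable hq0']
      at parallelogram
    linarith
  have hdiff_sq : ∀ x, (√(p x) - √(q x)) * (√(p x) + √(q x)) = p x - q x := fun x => by
    linear_combination Real.mul_self_sqrt (hp0 x) - Real.mul_self_sqrt (hq0 x)
  have hcs := sq_integral_abs_mul_le (hs.sub ht) (hs.add ht)
  simp only [Pi.sub_apply, Pi.add_apply, hdiff_sq, hsum_sq] at hcs
  exact two_sub_sqrt_four_sub_sq_le hcs

/-- Pinsker-type inequality for the Hellinger divergence:
`h²(P,Q) ≥ 2 - √(4 - V²)` where `V` is the variational divergence. -/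
theorem hellinger_pinsker {X : Type*} [MeasurableSpace X]
    (M P Q : Measure X) [IsProbabilityMeasure M] [IsProbabilityMeasure P]
    [IsProbabilityMeasure Q] (p q : X → ℝ) (hpm : Measurable p) (hqm : Measurable q)
    (hp0 : ∀ x, 0 ≤ p x) (hq0 : ∀ x, 0 ≤ q x)
    (hP : P = M.withDensity (fun x => ENNReal.ofReal (p x)))
    (hQ : Q = M.withDensity (fun x => ENNReal.ofReal (q x))) :
    2 - Real.sqrt (4 - (∫ x, |p x - q x| ∂M) ^ 2)
      ≤ ∫ x, (Real.sqrt (p x) - Real.sqrt (q x)) ^ 2 ∂M :=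
  hellinger_pinsker_general M P Q p q hpm hqm hp0 hq0 hP hQ
end
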